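/- arXiv:math/0609562 — 5 statements merged into one kernel-verified Lean document; each statement's English description precedes it below -/
import Mathlib

section
/- Let p be an odd prime, Q ⊂ GF(p)^× the set of quadratic residues and N the set of non-residues, and let S ⊆ GF(p) be non-empty with |S| even. Then the Hamming weight of the codeword c = (r_N r_S, r_Q r_S) of the QQR code C_NQ satisfies wt(c) = p − Σ_{a∈GF(p)} χ(f_S(a)) = 2p + 2 − |X_S(GF(p))|. -/
open Finset

/-- `r_S = Σ_{i∈S} x^i`, viewed as an element of `R = GF(2)[x]/(x^p-1)`
(identified with functions `ZMod p → ZMod 2` recording coefficients). -/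
def rOf {p : ℕ} (S : Finset (ZMod p)) : ZMod p → ZMod 2 :=
  fun a => if a ∈ S then 1 else 0

/-- Multiplication in `R = GF(2)[x]/(x^p-1)` (cyclic convolution of coefficients). -/
def conv {p : ℕ} [NeZero p] (f g : ZMod p → ZMod 2) : ZMod p → ZMod 2 :=
  fun a => ∑ b : ZMod p, f b * g (a - b)

/-- Hamming weight of an element of `R`. -/
def wt {p : ℕ} [NeZero p] (f : ZMod p → ZMod 2) : ℕ :=
  (Finset.univ.filter fun a => f a ≠ 0).card

/-- The set `Q` of quadratic residues in `GF(p)ˣ`. -/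
def Qset (p : ℕ) [NeZero p] : Finset (ZMod p) :=
  Finset.univ.filter fun a => a ≠ 0 ∧ ∃ b : ZMod p, b ^ 2 = a

/-- The set `N` of quadratic non-residues in `GF(p)ˣ`. -/
def Nset (p : ℕ) [NeZero p] : Finset (ZMod p) :=
  Finset.univ.filter fun a => a ≠ 0 ∧ ¬∃ b : ZMod p, b ^ 2 = a

/-- The character sum `Σ_{a ∈ GF(p)} χ(f_S(a))` where `f_S(x) = Π_{b∈S}(x-b)` and
`χ` is the Legendre character. -/
def charSum (p : ℕ) [Fact p.Prime] (S : Finset (ZMod p)) : ℤ :=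
  ∑ a : ZMod p, quadraticChar (ZMod p) (∏ b ∈ S, (a - b))

/-- `|X_S(GF(p))|`: the number of affine points of `y² = f_S(x)` over `GF(p)`,
plus `2` points at infinity if `|S|` is even and `1` if `|S|` is odd. -/
noncomputable def Xcard (p : ℕ) (S : Finset (ZMod p)) : ℕ :=
  Nat.card {xy : ZMod p × ZMod p // xy.2 ^ 2 = ∏ b ∈ S, (xy.1 - b)} +
    if Even S.card then 2 else 1

/-- The QQR codeword `(r_N r_S, r_Q r_S)`. -/
def qqr (p : ℕ) [NeZero p] (S : Finset (ZMod p)) :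
    (ZMod p → ZMod 2) × (ZMod p → ZMod 2) :=
  (conv (rOf (Nset p)) (rOf S), conv (rOf (Qset p)) (rOf S))

/-- Hamming weight of a length-`2p` vector identified with a pair of elements of `R`. -/
def wt2 {p : ℕ} [NeZero p] (x : (ZMod p → ZMod 2) × (ZMod p → ZMod 2)) : ℕ :=
  wt x.1 + wt x.2

/-- The LQR codeword `c_S = (r_N r_S, r_Q r_S, r_N r_S*, r_Q r_S*)`. -/
def lqr (p : ℕ) [NeZero p] (S : Finset (ZMod p)) :
    ((ZMod p → ZMod 2) × (ZMod p → ZMod 2)) × ((ZMod p → ZMod 2) × (ZMod p → ZMod 2)) :=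
  (qqr p S, qqr p Sᶜ)

/-- Hamming weight of a length-`4p` vector identified with a 4-tuple of elements of `R`. -/
def wt4 {p : ℕ} [NeZero p]
    (x : ((ZMod p → ZMod 2) × (ZMod p → ZMod 2)) × ((ZMod p → ZMod 2) × (ZMod p → ZMod 2))) : ℕ :=
  wt2 x.1 + wt2 x.2

lemma conv_rOf {p : ℕ} [NeZero p] (T S : Finset (ZMod p)) (a : ZMod p) :
    conv (rOf T) (rOf S) a = ((S.filter fun s => a - s ∈ T).card : ZMod 2) := by
  unfold conv rOf
  have h1 : (∑ b : ZMod p, (if b ∈ T then (1:ZMod 2) else 0) * (if a - b ∈ S then 1 else 0))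
      = ((Finset.univ.filter fun b : ZMod p => b ∈ T ∧ a - b ∈ S).card : ZMod 2) := by
    rw [Finset.card_filter]
    push_cast
    exact Finset.sum_congr rfl fun b _ => by split_ifs with h1 h2 h3 <;> simp_all
  rw [h1]
  congr 1
  apply Finset.card_bij (fun b _ => a - b)
  · intro b hb; simp only [mem_filter, mem_univ, true_and] at hb ⊢
    refine ⟨hb.2, ?_⟩; rw [sub_sub_cancel]; exact hb.1
  · intro b hb c hc h; exact sub_right_injective h
  · intro s hs; simp only [mem_filter, mem_univ, true_and] at hs
    refine ⟨a - s, ?_, by rw [sub_sub_cancel]⟩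
    simp only [mem_filter, mem_univ, true_and, sub_sub_cancel]
    exact ⟨hs.2, hs.1⟩

lemma natCast_zmod2_ne_zero (n : ℕ) : ((n : ZMod 2) ≠ 0) ↔ Odd n := by
  rw [Ne, ZMod.natCast_eq_zero_iff, Nat.odd_iff, Nat.two_dvd_ne_zero]

lemma pointwise (p : ℕ) [Fact p.Prime] (hp : p ≠ 2) (S : Finset (ZMod p))
    (heven : Even S.card) (a : ZMod p) :
    ((if Odd (S.filter fun s => a - s ∈ Nset p).card then (1:ℤ) else 0) +
     (if Odd (S.filter fun s => a - s ∈ Qset p).card then (1:ℤ) else 0)) =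
    1 - quadraticChar (ZMod p) (∏ b ∈ S, (a - b)) := by
  set nN := (S.filter fun s => a - s ∈ Nset p).card with hnN
  set nQ := (S.filter fun s => a - s ∈ Qset p).card with hnQ
  have hN' : (S.filter fun s => a - s ∈ Nset p)
      = (S.filter fun s => ¬ a - s = 0).filter fun s => ¬∃ b : ZMod p, b ^ 2 = a - s := by
    ext s; simp only [Nset, Finset.mem_filter, Finset.mem_univ, true_and, ne_eq, and_assoc]
  have hQ' : (S.filter fun s => a - s ∈ Qset p)
      = (S.filter fun s => ¬ a - s = 0).filter fun s => ∃ b : ZMod p, b ^ 2 = a - s := by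
    ext s; simp only [Qset, Finset.mem_filter, Finset.mem_univ, true_and, ne_eq, and_assoc]
  have h1 : ((S.filter fun s => ¬ a - s = 0).filter fun s => ∃ b : ZMod p, b ^ 2 = a - s).card
      + ((S.filter fun s => ¬ a - s = 0).filter fun s => ¬∃ b : ZMod p, b ^ 2 = a - s).card
      = (S.filter fun s => ¬ a - s = 0).card :=
    Finset.card_filter_add_card_filter_not _
  have h2 : (S.filter fun s => a - s = 0).card + (S.filter fun s => ¬ a - s = 0).card
      = S.card := Finset.card_filter_add_card_filter_not _
  obtain ⟨k, hk⟩ := heven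
  by_cases ha : a ∈ S
  · rw [Finset.prod_eq_zero ha (sub_self a), quadraticChar_zero]
    have hZ : (S.filter fun s => a - s = 0).card = 1 := by
      rw [show (S.filter fun s => a - s = 0) = {a} from by
        ext s; simp only [mem_filter, mem_singleton, sub_eq_zero]
        constructor
        · rintro ⟨_, h⟩; exact h.symm
        · rintro rfl; exact ⟨ha, rfl⟩]
      simp
    have hpart : nN + nQ + 1 = S.card := by rw [hnN, hnQ, hN', hQ']; omega
    rcases Nat.even_or_odd nN with hN | hN
    · have hQodd : Odd nQ := by
        rw [Nat.odd_iff]; rw [Nat.even_iff] at hN; omega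
      rw [if_neg (Nat.not_odd_iff_even.mpr hN), if_pos hQodd]; ring
    · have hQev : ¬ Odd nQ := by
        rw [Nat.not_odd_iff]; rw [Nat.odd_iff] at hN; omega
      rw [if_pos hN, if_neg hQev]; ring
  · have hZ : (S.filter fun s => a - s = 0).card = 0 := by
      rw [Finset.card_eq_zero, Finset.filter_eq_empty_iff]
      intro s hs h
      rw [sub_eq_zero] at h
      exact ha (h ▸ hs)
    have hpart : nN + nQ = S.card := by rw [hnN, hnQ, hN', hQ']; omega
    have hchi : quadraticChar (ZMod p) (∏ b ∈ S, (a - b)) = (-1) ^ nN := by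
      rw [map_prod]
      have : ∀ s ∈ S, quadraticChar (ZMod p) (a - s)
          = if a - s ∈ Nset p then (-1 : ℤ) else 1 := by
        intro s hs
        have hne : a - s ≠ 0 := by
          rw [Ne, sub_eq_zero]; exact fun h => ha (h ▸ hs)
        split_ifs with hmem
        · simp only [Nset, mem_filter, mem_univ, true_and] at hmem
          refine quadraticChar_neg_one_iff_not_isSquare.mpr ?_
          rintro ⟨r, hr⟩
          exact hmem.2 ⟨r, by rw [sq]; exact hr.symm⟩
        · simp only [Nset, mem_filter, mem_univ, true_and, not_and, not_not] at hmem
          obtain ⟨b, hb⟩ := hmem hne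
          exact (quadraticChar_one_iff_isSquare hne).mpr ⟨b, by rw [← hb, sq]⟩
      rw [Finset.prod_congr rfl this, Finset.prod_ite, Finset.prod_const, Finset.prod_const,
        one_pow, mul_one, ← hnN]
    rw [hchi]
    rcases Nat.even_or_odd nN with hN | hN
    · have hQev : ¬ Odd nQ := by
        rw [Nat.not_odd_iff]; rw [Nat.even_iff] at hN; omega
      rw [if_neg (Nat.not_odd_iff_even.mpr hN), if_neg hQev, Even.neg_one_pow hN]
      ring
    · have hQodd : Odd nQ := by
        rw [Nat.odd_iff]; rw [Nat.odd_iff] at hN; omega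
      rw [if_pos hN, if_pos hQodd, Odd.neg_one_pow hN]; ring

lemma wt_cast {p : ℕ} [NeZero p] (f : ZMod p → ZMod 2) :
    (wt f : ℤ) = ∑ a : ZMod p, if f a ≠ 0 then 1 else 0 := by
  rw [wt, Finset.card_filter]
  push_cast
  rfl


/-- Weight of a QQR codeword for `|S|` even. -/
theorem qqr_weight_even (p : ℕ) [Fact p.Prime] (hp : p ≠ 2)
    (S : Finset (ZMod p)) (hS : S.Nonempty) (heven : Even S.card) :
    (wt2 (qqr p S) : ℤ) = (p : ℤ) - charSum p S ∧
    (wt2 (qqr p S) : ℤ) = 2 * (p : ℤ) + 2 - (Xcard p S : ℤ) := by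
  have part1 : (wt2 (qqr p S) : ℤ) = (p : ℤ) - charSum p S := by
    have : (wt2 (qqr p S) : ℤ)
        = ∑ a : ZMod p, (1 - quadraticChar (ZMod p) (∏ b ∈ S, (a - b))) := by
      rw [wt2, qqr]
      push_cast
      rw [wt_cast, wt_cast, ← Finset.sum_add_distrib]
      refine Finset.sum_congr rfl fun a _ => ?_
      rw [← pointwise p hp S heven a]
      congr 1
      · rw [conv_rOf]
        congr 1
        simp [natCast_zmod2_ne_zero]
      · rw [conv_rOf]
        congr 1
        simp [natCast_zmod2_ne_zero]
    rw [this, Finset.sum_sub_distrib, Finset.sum_const, Finset.card_univ, ZMod.card, charSum]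
    push_cast [nsmul_eq_mul]; ring
  refine ⟨part1, ?_⟩
  have hchar : ringChar (ZMod p) ≠ 2 := by
    rw [ZMod.ringChar_zmod_n]; exact hp
  have hXc : (Xcard p S : ℤ) = (p : ℤ) + charSum p S + 2 := by
    rw [Xcard, if_pos heven]
    have hN : (Nat.card {xy : ZMod p × ZMod p // xy.2 ^ 2 = ∏ b ∈ S, (xy.1 - b)} : ℤ)
        = (p : ℤ) + charSum p S := by
      rw [Nat.card_eq_fintype_card,
        Fintype.card_congr (Equiv.subtypeProdEquivSigmaSubtype
          (fun x y : ZMod p => y ^ 2 = ∏ b ∈ S, (x - b))),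
        Fintype.card_sigma]
      push_cast
      have key : ∀ c : ZMod p, ((Fintype.card {y : ZMod p // y ^ 2 = c} : ℤ))
          = quadraticChar (ZMod p) c + 1 := by
        intro c
        rw [← quadraticChar_card_sqrts hchar c]
        congr 1
        rw [Set.toFinset_card]
        exact Fintype.card_congr (Equiv.refl _)
      rw [Finset.sum_congr rfl fun a _ => key (∏ b ∈ S, (a - b)),
        Finset.sum_add_distrib, Finset.sum_const, Finset.card_univ, ZMod.card, charSum]
      push_cast [nsmul_eq_mul]; ring
    push_cast [hN]; ring
  rw [part1, hXc]; ring
end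

section
/- Let p be a prime with p ≡ 1 (mod 4), Q ⊂ GF(p)^× the set of quadratic residues and N the set of non-residues, and let S ⊊ GF(p) be a subset with |S| odd (so S^c = GF(p)∖S is non-empty). Then the Hamming weight of the codeword c = (r_N r_S, r_Q r_S) of the QQR code C_NQ satisfies wt(c) = p − Σ_{a∈GF(p)} χ(f_{S^c}(a)) = 2p + 2 − |X_{S^c}(GF(p))|. -/
open Finset

/-!
For `a ∈ GF(p)` let `n_a = #{c ∈ S | a - c ∈ N}` and `q_a = #{c ∈ S | a - c ∈ Q}`; the two
coordinates of the codeword at position `a` are `n_a` and `q_a` modulo `2`. Since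
`n_a + q_a = |S ∖ {a}|` and `|S|` is odd, exactly one of them is odd when `a ∉ S`, and they have
the same parity when `a ∈ S`; hence `wt = |Sᶜ| + 2·#{a ∈ S | n_a odd}`. On the other side,
`χ(f_{Sᶜ}(a))` vanishes for `a ∉ S`, while for `a ∈ S` Wilson's theorem gives
`f_{Sᶜ}(a) · Π_{b ∈ S, b ≠ a} (a - b) = Π_{b ≠ a} (a - b) = -1`, a square as `p ≡ 1 (mod 4)`, so
`χ(f_{Sᶜ}(a)) = Π_{b ∈ S, b ≠ a} χ(a - b) = (-1)^{n_a}`. The point count is the usual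
`Σ_x (1 + χ(f(x)))`.
-/

theorem Finset.sum_neg_one_pow_eq_card_sub {ι : Type*} (s : Finset ι) (n : ι → ℕ) :
    ∑ i ∈ s, (-1 : ℤ) ^ n i = #s - 2 * #{i ∈ s | Odd (n i)} := by
  rw [natCast_card_filter, card_eq_sum_ones, Nat.cast_sum, mul_sum, ← sum_sub_distrib]
  refine sum_congr rfl fun i _ => ?_
  rcases Nat.even_or_odd (n i) with h | h
  · simp [h.neg_one_pow, Nat.not_odd_iff_even.2 h]
  · simp [h.neg_one_pow, h]

section FiniteField

variable {F : Type*} [Field F] [Fintype F] [DecidableEq F]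

theorem prod_sub_erase_eq_neg_one (a : F) : ∏ b ∈ univ.erase a, (a - b) = -1 := by
  calc ∏ b ∈ univ.erase a, (a - b) = ∏ u : Fˣ, (u : F) := by
        symm
        refine prod_bij (fun u _ => a - (u : F)) (fun u _ => by simp [u.ne_zero])
          (fun u _ v _ h => Units.ext (sub_right_inj.1 h)) (fun b hb => ?_)
          (fun u _ => by rw [sub_sub_cancel])
        exact ⟨Units.mk0 _ (sub_ne_zero.2 (ne_of_mem_erase hb).symm), mem_univ _, by simp⟩
    _ = -1 := by
        simpa using congrArg Units.val (FiniteField.prod_univ_units_id_eq_neg_one (K := F))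

theorem quadraticChar_prod_sub_compl (hF : IsSquare (-1 : F)) {S : Finset F} {a : F}
    (ha : a ∈ S) :
    quadraticChar F (∏ b ∈ Sᶜ, (a - b)) = ∏ b ∈ S.erase a, quadraticChar F (a - b) := by
  have hne : ∏ b ∈ S.erase a, (a - b) ≠ 0 :=
    prod_ne_zero_iff.2 fun b hb => sub_ne_zero.2 (ne_of_mem_erase hb).symm
  have hunion : S.erase a ∪ Sᶜ = univ.erase a := by
    ext b
    by_cases hb : b = a <;> simp [hb, ha, em]
  have hone : quadraticChar F (∏ b ∈ S.erase a, (a - b)) * quadraticChar F (∏ b ∈ Sᶜ, (a - b))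
      = 1 := by
    rw [← map_mul, ← prod_union ((disjoint_compl_right).mono_left (erase_subset a S)), hunion,
      prod_sub_erase_eq_neg_one, quadraticChar_one_iff_isSquare (neg_ne_zero.2 one_ne_zero)]
    exact hF
  rw [← map_prod]
  linear_combination (quadraticChar F (∏ b ∈ S.erase a, (a - b))) * hone
    - quadraticChar F (∏ b ∈ Sᶜ, (a - b)) * quadraticChar_sq_one hne

theorem natCard_sq_eq_card_add_sum_quadraticChar (hF : ringChar F ≠ 2) (f : F → F) :
    (Nat.card {xy : F × F // xy.2 ^ 2 = f xy.1} : ℤ)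
      = Fintype.card F + ∑ x, quadraticChar F (f x) := by
  rw [Nat.card_eq_fintype_card, Fintype.card_congr
      (Equiv.subtypeProdEquivSigmaSubtype fun x y => y ^ 2 = f x),
    Fintype.card_sigma, Nat.cast_sum, Fintype.card_eq_sum_ones (α := F), Nat.cast_sum,
    ← sum_add_distrib]
  refine sum_congr rfl fun x _ => ?_
  rw [Fintype.card_subtype, Nat.cast_one, add_comm, ← quadraticChar_card_sqrts hF,
    Set.toFinset_ofPred]

end FiniteField

section QQRCode

variable {p : ℕ} [NeZero p]

theorem mem_Nset_iff {x : ZMod p} : x ∈ Nset p ↔ x ≠ 0 ∧ ¬IsSquare x := by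
  simp [Nset, isSquare_iff_exists_sq, eq_comm]

theorem Nset_union_Qset : Nset p ∪ Qset p = univ.erase 0 := by
  ext x
  by_cases hx : x = 0
  · simp [Nset, Qset, hx]
  · simpa [Nset, Qset, hx] using (em _).symm.imp_left not_exists.1

theorem disjoint_Nset_Qset : Disjoint (Nset p) (Qset p) :=
  disjoint_filter.2 fun _ _ hN hQ => hN.2 hQ.2

theorem conv_rOf_apply (T S : Finset (ZMod p)) (a : ZMod p) :
    conv (rOf T) (rOf S) a = (#{c ∈ S | a - c ∈ T} : ZMod 2) := by
  rw [conv, ← (Equiv.subLeft a).sum_comp, natCast_card_filter, ← sum_subset (subset_univ S)]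
  · refine sum_congr rfl fun c hc => ?_
    by_cases hac : a - c ∈ T <;> simp [rOf, hc, hac]
  · intro c _ hc
    simp [rOf, hc]

theorem wt_conv_rOf (T S : Finset (ZMod p)) :
    wt (conv (rOf T) (rOf S)) = #{a | Odd #{c ∈ S | a - c ∈ T}} := by
  simp only [wt, conv_rOf_apply, Ne, ZMod.natCast_eq_zero_iff_even, Nat.not_even_iff_odd]

theorem card_filter_sub_mem_Nset_add_card_filter_sub_mem_Qset (S : Finset (ZMod p))
    (a : ZMod p) :
    #{c ∈ S | a - c ∈ Nset p} + #{c ∈ S | a - c ∈ Qset p} = #(S.erase a) := by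
  rw [← card_union_of_disjoint
      (disjoint_filter.2 fun _ _ hN hQ => disjoint_left.1 disjoint_Nset_Qset hN hQ),
    ← filter_or]
  simp_rw [← mem_union, Nset_union_Qset, mem_erase, sub_ne_zero, mem_univ, and_true, filter_ne]

theorem odd_card_filter_sub_mem_Qset_iff {S : Finset (ZMod p)} (hS : Odd #S) (a : ZMod p) :
    Odd #{c ∈ S | a - c ∈ Qset p} ↔ (a ∈ S ↔ Odd #{c ∈ S | a - c ∈ Nset p}) := by
  have hsum := card_filter_sub_mem_Nset_add_card_filter_sub_mem_Qset S a
  by_cases ha : a ∈ S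
  · rw [card_erase_of_mem ha] at hsum
    have hpos := hS.pos
    simp only [ha, true_iff, Nat.odd_iff] at hS ⊢
    omega
  · rw [erase_eq_of_notMem ha] at hsum
    simp only [ha, false_iff, Nat.odd_iff] at hS ⊢
    omega

theorem wt2_qqr {S : Finset (ZMod p)} (hS : Odd #S) :
    wt2 (qqr p S) = #Sᶜ + 2 * #{a ∈ S | Odd #{c ∈ S | a - c ∈ Nset p}} := by
  rw [wt2, qqr, wt_conv_rOf, wt_conv_rOf, card_filter, card_filter, card_filter,
    ← sum_add_distrib, ← sum_add_sum_compl S, mul_sum, add_comm, card_eq_sum_ones]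
  congr 1 <;> refine sum_congr rfl fun a ha => ?_ <;>
    simp only [odd_card_filter_sub_mem_Qset_iff hS]
  · by_cases h : Odd #{c ∈ S | a - c ∈ Nset p} <;> simp [mem_compl.1 ha, h]
  · simp only [ha, true_iff, two_mul]

end QQRCode

section QuadraticResidues

variable {p : ℕ} [Fact p.Prime]

theorem quadraticChar_eq_ite_mem_Nset {x : ZMod p} (hx : x ≠ 0) :
    quadraticChar (ZMod p) x = if x ∈ Nset p then -1 else 1 := by
  by_cases h : IsSquare x
  · rw [if_neg fun hN => (mem_Nset_iff.1 hN).2 h]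
    exact (quadraticChar_one_iff_isSquare hx).2 h
  · rw [if_pos (mem_Nset_iff.2 ⟨hx, h⟩)]
    exact quadraticChar_neg_one_iff_not_isSquare.2 h

theorem quadraticChar_prod_sub_compl_eq_neg_one_pow (hp : IsSquare (-1 : ZMod p))
    {S : Finset (ZMod p)} {a : ZMod p} (ha : a ∈ S) :
    quadraticChar (ZMod p) (∏ b ∈ Sᶜ, (a - b)) = (-1) ^ #{c ∈ S | a - c ∈ Nset p} := by
  have ha' : a ∉ ({c ∈ S | a - c ∈ Nset p} : Finset (ZMod p)) := by
    simp [mem_Nset_iff]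
  rw [quadraticChar_prod_sub_compl hp ha,
    prod_congr rfl fun b hb => quadraticChar_eq_ite_mem_Nset
      (sub_ne_zero.2 (ne_of_mem_erase hb).symm),
    prod_ite, prod_const, prod_const, one_pow, mul_one, filter_erase, erase_eq_of_notMem ha']

theorem charSum_compl (hp : IsSquare (-1 : ZMod p)) (S : Finset (ZMod p)) :
    charSum p Sᶜ = ∑ a ∈ S, (-1) ^ #{c ∈ S | a - c ∈ Nset p} := by
  rw [charSum, ← sum_add_sum_compl S, sum_congr rfl fun a ha =>
      quadraticChar_prod_sub_compl_eq_neg_one_pow hp ha, add_eq_left]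
  exact sum_eq_zero fun a ha => by rw [prod_eq_zero ha (sub_self a), MulChar.map_zero]

end QuadraticResidues

theorem qqr_weight_odd_one_mod_four_general (p : ℕ) [Fact p.Prime] (hp4 : p % 4 = 1)
    (S : Finset (ZMod p)) (hodd : Odd S.card) :
    (wt2 (qqr p S) : ℤ) = (p : ℤ) - charSum p Sᶜ ∧
    (wt2 (qqr p S) : ℤ) = 2 * (p : ℤ) + 2 - (Xcard p Sᶜ : ℤ) := by
  have hSp : #S ≤ p := (card_le_univ S).trans_eq (ZMod.card p)
  have hweight : (wt2 (qqr p S) : ℤ) = p - charSum p Sᶜ := by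
    rw [wt2_qqr hodd, charSum_compl (ZMod.exists_sq_eq_neg_one_iff.2 (by omega)),
      sum_neg_one_pow_eq_card_sub, card_compl, ZMod.card]
    push_cast [hSp]
    ring
  refine ⟨hweight, ?_⟩
  have heven : Even #Sᶜ := by
    rw [card_compl, ZMod.card, Nat.even_sub hSp]
    exact iff_of_false (Nat.not_even_iff_odd.2 (Nat.odd_iff.2 (by omega)))
      (Nat.not_even_iff_odd.2 hodd)
  have hchar : ringChar (ZMod p) ≠ 2 := by
    rw [ZMod.ringChar_zmod_n]
    omega
  rw [hweight, Xcard, if_pos heven, Nat.cast_add,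
    natCard_sq_eq_card_add_sum_quadraticChar hchar fun x => ∏ b ∈ Sᶜ, (x - b), ZMod.card, charSum]
  push_cast
  ring

/-- Weight of a QQR codeword for `|S|` odd and `p ≡ 1 (mod 4)`. -/
theorem qqr_weight_odd_one_mod_four (p : ℕ) [Fact p.Prime] (hp4 : p % 4 = 1)
    (S : Finset (ZMod p)) (hS : S ≠ Finset.univ) (hodd : Odd S.card) :
    (wt2 (qqr p S) : ℤ) = (p : ℤ) - charSum p Sᶜ ∧
    (wt2 (qqr p S) : ℤ) = 2 * (p : ℤ) + 2 - (Xcard p Sᶜ : ℤ) :=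
  qqr_weight_odd_one_mod_four_general p hp4 S hodd
end

section
/- Let p be an odd prime and for S ⊆ GF(p) let c_S = (r_N r_S, r_Q r_S, r_N r_S*, r_Q r_S*) ∈ GF(2)^{4p}, and let C = {c_S : S ⊆ GF(p)}. If p ≡ 3 (mod 4) then the map S ↦ c_S is injective, so |C| = 2^p. If p ≡ 1 (mod 4) then c_{S₁} = c_{S₂} if and only if S₂ = S₁ or S₂ = S₁^c, so |C| = 2^{p−1}. -/
open Finset

section Aux
variable {p : ℕ} [hFp : Fact p.Prime]

lemma sum_rOf (S : Finset (ZMod p)) : ∑ b : ZMod p, rOf S b = (S.card : ZMod 2) := by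
  simp [rOf, Finset.sum_ite_mem]

lemma sum_shift (a : ZMod p) (f : ZMod p → ZMod 2) :
    ∑ b : ZMod p, f (a - b) = ∑ c : ZMod p, f c :=
  Fintype.sum_equiv (Equiv.subLeft a) _ _ (fun _ => rfl)

lemma rN_add_rQ (b : ZMod p) :
    rOf (Nset p) b + rOf (Qset p) b = if b = 0 then 0 else 1 := by
  unfold rOf Nset Qset
  by_cases hb : b = 0 <;> by_cases hsq : ∃ c : ZMod p, c ^ 2 = b <;>
    simp [hb, hsq, Finset.mem_filter]

lemma rOf_compl (S : Finset (ZMod p)) (a : ZMod p) : rOf Sᶜ a = rOf S a + 1 := by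
  unfold rOf
  by_cases h : a ∈ S <;> simp [h] <;> decide

/-- `conv r_N r_{Sᶜ} = conv r_N r_S + |N|` (and similarly for any T). -/
lemma conv_compl (T S : Finset (ZMod p)) (a : ZMod p) :
    conv (rOf T) (rOf Sᶜ) a = conv (rOf T) (rOf S) a + (T.card : ZMod 2) := by
  unfold conv
  rw [← sum_rOf T, ← Finset.sum_add_distrib]
  refine Finset.sum_congr rfl fun b _ => ?_
  rw [rOf_compl, mul_add, mul_one]

lemma card_Q_eq_card_N (hp : p ≠ 2) : (Qset p).card = (Nset p).card := by
  have hchar : ringChar (ZMod p) ≠ 2 := by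
    rw [ZMod.ringChar_zmod_n]; exact hp
  have hsum := quadraticChar_sum_zero hchar (F := ZMod p)
  have hdisj : Disjoint (Qset p) (Nset p) := by
    rw [Finset.disjoint_left]
    intro a ha hb
    simp only [Qset, Nset, Finset.mem_filter] at ha hb
    exact hb.2.2 ha.2.2
  have hunion : Qset p ∪ Nset p = Finset.univ.erase 0 := by
    ext a
    simp only [Qset, Nset, Finset.mem_union, Finset.mem_filter, Finset.mem_erase,
      Finset.mem_univ, and_true, true_and]
    tauto
  have h0 : ∑ a : ZMod p, quadraticChar (ZMod p) a
      = ∑ a ∈ Qset p ∪ Nset p, quadraticChar (ZMod p) a := by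
    rw [hunion]
    rw [← Finset.add_sum_erase _ _ (Finset.mem_univ (0 : ZMod p)), quadraticChar_zero, zero_add]
  rw [h0, Finset.sum_union hdisj] at hsum
  have hQ : ∑ a ∈ Qset p, quadraticChar (ZMod p) a = (Qset p).card := by
    rw [show ((Qset p).card : ℤ) = ∑ _a ∈ Qset p, (1 : ℤ) by simp]
    refine Finset.sum_congr rfl fun a ha => ?_
    simp only [Qset, Finset.mem_filter] at ha
    rw [quadraticChar_one_iff_isSquare ha.2.1]
    obtain ⟨b, hb⟩ := ha.2.2
    exact ⟨b, by rw [← hb]; ring⟩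
  have hN : ∑ a ∈ Nset p, quadraticChar (ZMod p) a = -(Nset p).card := by
    rw [show -((Nset p).card : ℤ) = ∑ _a ∈ Nset p, (-1 : ℤ) by simp]
    refine Finset.sum_congr rfl fun a ha => ?_
    simp only [Nset, Finset.mem_filter] at ha
    rw [quadraticChar_neg_one_iff_not_isSquare]
    intro ⟨b, hb⟩
    exact ha.2.2 ⟨b, by rw [hb]; ring⟩
  rw [hQ, hN] at hsum
  omega

lemma card_Q_add_card_N : (Qset p).card + (Nset p).card = p - 1 := by
  have hdisj : Disjoint (Qset p) (Nset p) := by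
    rw [Finset.disjoint_left]
    intro a ha hb
    simp only [Qset, Nset, Finset.mem_filter] at ha hb
    exact hb.2.2 ha.2.2
  have hunion : Qset p ∪ Nset p = Finset.univ.erase 0 := by
    ext a
    simp only [Qset, Nset, Finset.mem_union, Finset.mem_filter, Finset.mem_erase,
      Finset.mem_univ, and_true, true_and]
    tauto
  rw [← Finset.card_union_of_disjoint hdisj, hunion,
    Finset.card_erase_of_mem (Finset.mem_univ _), Finset.card_univ, ZMod.card]

lemma two_mul_card_N (hp : p ≠ 2) : 2 * (Nset p).card = p - 1 := by
  have := card_Q_eq_card_N hp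
  have := card_Q_add_card_N (p := p)
  omega

/-- Core lemma: equality of QQR codewords forces `S₂ = S₁` or `S₂ = S₁ᶜ`. -/
lemma key (S₁ S₂ : Finset (ZMod p)) (h : qqr p S₁ = qqr p S₂) : S₂ = S₁ ∨ S₂ = S₁ᶜ := by
  have h1 : conv (rOf (Nset p)) (rOf S₁) = conv (rOf (Nset p)) (rOf S₂) := congrArg Prod.fst h
  have h2 : conv (rOf (Qset p)) (rOf S₁) = conv (rOf (Qset p)) (rOf S₂) := congrArg Prod.snd h
  -- evaluate the sum identity
  have main : ∀ a : ZMod p, rOf S₁ a + rOf S₂ a = (S₁.card : ZMod 2) + (S₂.card : ZMod 2) := by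
    intro a
    have e1 := congrFun h1 a
    have e2 := congrFun h2 a
    unfold conv at e1 e2
    have hsum : ∀ S : Finset (ZMod p),
        ∑ b : ZMod p, rOf (Nset p) b * rOf S (a - b) +
        ∑ b : ZMod p, rOf (Qset p) b * rOf S (a - b)
        = (S.card : ZMod 2) + rOf S a := by
      intro S
      rw [← Finset.sum_add_distrib]
      have : ∀ b : ZMod p, rOf (Nset p) b * rOf S (a - b) + rOf (Qset p) b * rOf S (a - b)
          = rOf S (a - b) + (if b = 0 then 1 else 0) * rOf S (a - b) := by
        intro b
        rw [← add_mul, rN_add_rQ]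
        by_cases hb : b = 0 <;> simp [hb, CharTwo.add_self_eq_zero]
      rw [Finset.sum_congr rfl fun b _ => this b, Finset.sum_add_distrib, sum_shift, sum_rOf]
      congr 1
      simp only [ite_mul, one_mul, zero_mul]
      rw [Finset.sum_ite_eq' Finset.univ (0 : ZMod p) (fun b => rOf S (a - b))]
      simp
    have q1 := hsum S₁
    have q2 := hsum S₂
    rw [e1, e2] at q1
    rw [q2] at q1
    have arith : ∀ x y u v : ZMod 2, u + x = v + y → x + y = u + v := by decide
    exact arith _ _ _ _ q1.symm
  have hz : ((S₁.card : ZMod 2) + (S₂.card : ZMod 2) = 0) ∨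
      ((S₁.card : ZMod 2) + (S₂.card : ZMod 2) = 1) := by
    generalize (S₁.card : ZMod 2) + (S₂.card : ZMod 2) = x
    revert x; decide
  rcases hz with hz | hz
  · left
    ext a
    have := main a
    rw [hz] at this
    unfold rOf at this
    by_cases h1 : a ∈ S₁ <;> by_cases h2 : a ∈ S₂ <;> simp [h1, h2] at this ⊢ <;>
      revert this <;> decide
  · right
    ext a
    have := main a
    rw [hz] at this
    unfold rOf at this
    simp only [Finset.mem_compl]
    by_cases h1 : a ∈ S₁ <;> by_cases h2 : a ∈ S₂ <;> simp [h1, h2] at this ⊢ <;>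
      revert this <;> decide

end Aux

section Main
variable {p : ℕ} [hFp : Fact p.Prime]

lemma key_compl_ne (hp : p ≠ 2) (h4 : p % 4 = 3) (S : Finset (ZMod p)) :
    qqr p S ≠ qqr p Sᶜ := by
  intro h
  have hq : conv (rOf (Nset p)) (rOf S) = conv (rOf (Nset p)) (rOf Sᶜ) := congrArg Prod.fst h
  have := congrFun hq 0
  rw [conv_compl] at this
  have harith : ∀ x y : ZMod 2, x = x + y → y = 0 := by decide
  have hz := harith _ _ this
  rw [ZMod.natCast_eq_zero_iff] at hz
  have h2 := two_mul_card_N (p := p) hp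
  have hple := hFp.out.two_le
  omega

lemma qqr_compl_eq (hp : p ≠ 2) (h4 : p % 4 = 1) (S : Finset (ZMod p)) :
    qqr p Sᶜ = qqr p S := by
  have h2 := two_mul_card_N (p := p) hp
  have hple := hFp.out.two_le
  have hQN := card_Q_eq_card_N (p := p) hp
  have hN : ((Nset p).card : ZMod 2) = 0 := by
    rw [ZMod.natCast_eq_zero_iff]; omega
  have hQ : ((Qset p).card : ZMod 2) = 0 := by
    rw [ZMod.natCast_eq_zero_iff]; omega
  refine Prod.ext ?_ ?_ <;> funext a
  · show conv (rOf (Nset p)) (rOf Sᶜ) a = conv (rOf (Nset p)) (rOf S) a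
    rw [conv_compl, hN, add_zero]
  · show conv (rOf (Qset p)) (rOf Sᶜ) a = conv (rOf (Qset p)) (rOf S) a
    rw [conv_compl, hQ, add_zero]

lemma lqr_compl_eq (hp : p ≠ 2) (h4 : p % 4 = 1) (S : Finset (ZMod p)) :
    lqr p Sᶜ = lqr p S := by
  unfold lqr
  rw [compl_compl, qqr_compl_eq hp h4]

end Main

/-- Size of the LQR code: for `p ≡ 3 (mod 4)` the map `S ↦ c_S` is injective and
`|C| = 2^p`; for `p ≡ 1 (mod 4)`, `c_{S₁} = c_{S₂}` iff `S₂ = S₁` or `S₂ = S₁ᶜ`,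
and `|C| = 2^{p-1}`. -/
theorem lqr_code_size (p : ℕ) [Fact p.Prime] (hp : p ≠ 2) :
    (p % 4 = 3 → Function.Injective (lqr p) ∧
      Nat.card (Set.range (lqr p)) = 2 ^ p) ∧
    (p % 4 = 1 →
      (∀ S₁ S₂ : Finset (ZMod p), lqr p S₁ = lqr p S₂ ↔ S₂ = S₁ ∨ S₂ = S₁ᶜ) ∧
      Nat.card (Set.range (lqr p)) = 2 ^ (p - 1)) := by
  constructor
  · intro h4
    have hinj : Function.Injective (lqr p) := by
      intro S₁ S₂ h
      have hq : qqr p S₁ = qqr p S₂ := congrArg Prod.fst h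
      rcases key S₁ S₂ hq with h' | h'
      · exact h'.symm
      · exfalso
        subst h'
        exact key_compl_ne hp h4 S₁ hq
    refine ⟨hinj, ?_⟩
    rw [Nat.card_range_of_injective hinj, Nat.card_eq_fintype_card,
      Fintype.card_finset, ZMod.card]
  · intro h4
    have hiff : ∀ S₁ S₂ : Finset (ZMod p), lqr p S₁ = lqr p S₂ ↔ S₂ = S₁ ∨ S₂ = S₁ᶜ := by
      intro S₁ S₂
      constructor
      · intro h
        exact key S₁ S₂ (congrArg Prod.fst h)
      · rintro (rfl | rfl)
        · rfl
        · exact (lqr_compl_eq hp h4 S₁).symm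
    refine ⟨hiff, ?_⟩
    have hrange : Set.range (lqr p) = lqr p '' {S : Finset (ZMod p) | (0 : ZMod p) ∈ S} := by
      apply Set.Subset.antisymm
      · rintro _ ⟨S, rfl⟩
        by_cases h0 : (0 : ZMod p) ∈ S
        · exact ⟨S, h0, rfl⟩
        · exact ⟨Sᶜ, Finset.mem_compl.mpr h0, lqr_compl_eq hp h4 S⟩
      · exact Set.image_subset_range _ _
    have hinjOn : Set.InjOn (lqr p) {S : Finset (ZMod p) | (0 : ZMod p) ∈ S} := by
      intro S₁ h₁ S₂ h₂ h
      rcases key S₁ S₂ (congrArg Prod.fst h) with h' | h'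
      · exact h'.symm
      · exfalso
        subst h'
        exact Finset.mem_compl.mp h₂ h₁
    rw [hrange, Nat.card_coe_set_eq, Set.ncard_image_of_injOn hinjOn]
    have hset : {S : Finset (ZMod p) | (0 : ZMod p) ∈ S}
        = ↑(Finset.univ.filter fun S : Finset (ZMod p) => (0 : ZMod p) ∈ S) := by
      ext S; simp
    rw [hset, Set.ncard_coe_finset]
    have hcard : (Finset.univ.filter fun S : Finset (ZMod p) => (0 : ZMod p) ∈ S).card
        = ((Finset.univ.erase (0 : ZMod p)).powerset).card := by
      refine Finset.card_bij' (fun S _ => S.erase (0 : ZMod p))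
        (fun T _ => insert (0 : ZMod p) T) ?_ ?_ ?_ ?_
      · intro S hS
        rw [Finset.mem_powerset]
        exact Finset.erase_subset_erase 0 (Finset.subset_univ S)
      · intro T hT
        simp
      · intro S hS
        exact Finset.insert_erase (Finset.mem_filter.mp hS).2
      · intro T hT
        refine Finset.erase_insert ?_
        rw [Finset.mem_powerset] at hT
        intro h0
        exact (Finset.mem_erase.mp (hT h0)).1 rfl
    rw [hcard, Finset.card_powerset, Finset.card_erase_of_mem (Finset.mem_univ _),
      Finset.card_univ, ZMod.card]
end

section
/- There exists a constant p₀ such that for every prime p > p₀, there is a non-empty subset S ⊆ GF(p) with |X_S(GF(p))| > 1.39·p. -/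
open Finset

section Aux

open Polynomial

set_option maxRecDepth 8000

variable {p : ℕ} [Fact p.Prime]

private lemma aux_odd (hp2 : p ≠ 2) : p % 2 = 1 :=
  ((Fact.out : p.Prime).eq_two_or_odd).resolve_left hp2

private lemma aux_half_ne (hp2 : p ≠ 2) : p / 2 ≠ 0 := by
  have := (Fact.out : p.Prime).two_le
  have := aux_odd (p := p) hp2
  omega

private lemma aux_two_ne_zero (hp2 : p ≠ 2) : (2 : ZMod p) ≠ 0 := by
  haveI : NeZero p := ⟨(Fact.out : p.Prime).ne_zero⟩
  intro h
  rw [show (2 : ZMod p) = ((2 : ℕ) : ZMod p) by norm_num,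
    ZMod.natCast_eq_zero_iff] at h
  have h1 := Nat.le_of_dvd (by norm_num) h
  have h2 := (Fact.out : p.Prime).two_le
  omega

private lemma one_ne_neg_one' (hp2 : p ≠ 2) : (1 : ZMod p) ≠ -1 := by
  intro h
  exact aux_two_ne_zero hp2 (by linear_combination h)

/-- members of `T` all satisfy `a ^ (p/2) = c`, so `T.val ≤ roots of X^(p/2) - C c`. -/
private lemma val_le_roots (hp2 : p ≠ 2) (c : ZMod p) (T : Finset (ZMod p))
    (hT : ∀ a ∈ T, a ^ (p / 2) = c) :
    T.val ≤ (X ^ (p / 2) - C c : (ZMod p)[X]).roots := by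
  classical
  have hg : (X ^ (p / 2) - C c : (ZMod p)[X]).Monic :=
    monic_X_pow_sub_C c (aux_half_ne hp2)
  rw [Multiset.le_iff_count]
  intro b
  by_cases hb : b ∈ T
  · rw [Multiset.count_eq_one_of_mem T.nodup hb]
    refine Multiset.one_le_count_iff_mem.mpr ?_
    rw [mem_roots hg.ne_zero]
    simp only [IsRoot, eval_sub, eval_pow, eval_X, eval_C, hT b hb, sub_self]
  · rw [Multiset.count_eq_zero_of_notMem (by simpa using hb)]
    exact Nat.zero_le _

private lemma card_le_half (hp2 : p ≠ 2) (c : ZMod p) (T : Finset (ZMod p))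
    (hT : ∀ a ∈ T, a ^ (p / 2) = c) : T.card ≤ p / 2 := by
  have h1 := Multiset.card_le_card (val_le_roots hp2 c T hT)
  have h2 := Polynomial.card_roots' (X ^ (p / 2) - C c : (ZMod p)[X])
  rw [natDegree_X_pow_sub_C] at h2
  exact le_trans h1 h2

private lemma prod_formula (hp2 : p ≠ 2) (c : ZMod p) (T : Finset (ZMod p))
    (hT : ∀ a ∈ T, a ^ (p / 2) = c) (hcard : T.card = p / 2) (a : ZMod p) :
    ∏ b ∈ T, (a - b) = a ^ (p / 2) - c := by
  classical
  have hg : (X ^ (p / 2) - C c : (ZMod p)[X]).Monic :=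
    monic_X_pow_sub_C c (aux_half_ne hp2)
  have hle := val_le_roots hp2 c T hT
  have hcr := Polynomial.card_roots' (X ^ (p / 2) - C c : (ZMod p)[X])
  rw [natDegree_X_pow_sub_C] at hcr
  have hval : T.val = (X ^ (p / 2) - C c : (ZMod p)[X]).roots := by
    refine Multiset.eq_of_le_of_card_le hle ?_
    rw [show Multiset.card T.val = T.card from rfl, hcard]
    exact hcr
  have hprod := prod_multiset_X_sub_C_of_monic_of_roots_card_eq hg
    (by rw [natDegree_X_pow_sub_C, ← hval]; exact hcard)
  have hpoly : ∏ b ∈ T, (X - C b) = (X ^ (p / 2) - C c : (ZMod p)[X]) := by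
    rw [Finset.prod_eq_multiset_prod, hval]
    exact hprod
  have heval := congrArg (Polynomial.eval a) hpoly
  simpa [Polynomial.eval_prod] using heval

private lemma mem_Qset_iff (hp2 : p ≠ 2) {a : ZMod p} :
    a ∈ Qset p ↔ a ≠ 0 ∧ a ^ (p / 2) = 1 := by
  have hchar : ringChar (ZMod p) ≠ 2 := by
    rw [ZMod.ringChar_zmod_n]; exact hp2
  simp only [Qset, Finset.mem_filter, Finset.mem_univ, true_and]
  refine and_congr_right fun ha => ?_
  have hsq : IsSquare a ↔ ∃ b : ZMod p, b ^ 2 = a := by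
    constructor
    · rintro ⟨r, rfl⟩; exact ⟨r, by rw [pow_two]⟩
    · rintro ⟨b, rfl⟩; exact ⟨b, by rw [pow_two]⟩
  rw [← hsq]
  have h := FiniteField.isSquare_iff hchar ha
  rwa [ZMod.card] at h

private lemma mem_Nset_iff_s18 (hp2 : p ≠ 2) {a : ZMod p} :
    a ∈ Nset p ↔ a ≠ 0 ∧ a ^ (p / 2) = -1 := by
  have hchar : ringChar (ZMod p) ≠ 2 := by
    rw [ZMod.ringChar_zmod_n]; exact hp2
  have hQ := mem_Qset_iff (p := p) hp2 (a := a)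
  simp only [Qset, Nset, Finset.mem_filter, Finset.mem_univ, true_and] at hQ ⊢
  refine and_congr_right fun ha => ?_
  have hdich : a ^ (p / 2) = 1 ∨ a ^ (p / 2) = -1 := by
    have h := FiniteField.pow_dichotomy hchar ha
    rwa [ZMod.card] at h
  have h1 : (∃ b : ZMod p, b ^ 2 = a) ↔ a ^ (p / 2) = 1 := by tauto
  constructor
  · intro h
    rcases hdich with hd | hd
    · exact absurd (h1.mpr hd) h
    · exact hd
  · intro h hex
    exact one_ne_neg_one' hp2 ((h1.mp hex).symm.trans h)

private lemma disjoint_QN : Disjoint (Qset p) (Nset p) := by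
  classical
  rw [Finset.disjoint_left]
  intro a ha hb
  simp only [Qset, Nset, Finset.mem_filter] at ha hb
  exact hb.2.2 ha.2.2

private lemma card_QN (hp2 : p ≠ 2) :
    (Qset p).card = p / 2 ∧ (Nset p).card = p / 2 := by
  classical
  have hQle : (Qset p).card ≤ p / 2 :=
    card_le_half hp2 1 _ (fun a ha => ((mem_Qset_iff hp2).mp ha).2)
  have hNle : (Nset p).card ≤ p / 2 :=
    card_le_half hp2 (-1) _ (fun a ha => ((mem_Nset_iff_s18 hp2).mp ha).2)
  have hunion : Qset p ∪ Nset p = Finset.univ \ {0} := by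
    ext a
    simp only [Qset, Nset, Finset.mem_union, Finset.mem_filter, Finset.mem_univ, true_and,
      Finset.mem_sdiff, Finset.mem_singleton]
    tauto
  have hcardU : (Qset p ∪ Nset p).card = p - 1 := by
    rw [hunion, Finset.card_sdiff_of_subset (Finset.singleton_subset_iff.mpr (Finset.mem_univ 0)),
      Finset.card_univ, ZMod.card, Finset.card_singleton]
  rw [Finset.card_union_of_disjoint disjoint_QN] at hcardU
  have hodd := aux_odd (p := p) hp2
  have := (Fact.out : p.Prime).two_le
  omega

/-- Counting lower bound for the affine point count. -/
private lemma count_lower (hp2 : p ≠ 2) (S A B : Finset (ZMod p))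
    (hA : ∀ a ∈ A, ∏ b ∈ S, (a - b) = 0)
    (hB : ∀ a ∈ B, ∃ c : ZMod p, c ≠ 0 ∧ c ^ 2 = ∏ b ∈ S, (a - b))
    (hAB : Disjoint A B) :
    A.card + 2 * B.card ≤
      Nat.card {xy : ZMod p × ZMod p // xy.2 ^ 2 = ∏ b ∈ S, (xy.1 - b)} := by
  classical
  have h2 : (2 : ZMod p) ≠ 0 := aux_two_ne_zero hp2
  have e : {xy : ZMod p × ZMod p // xy.2 ^ 2 = ∏ b ∈ S, (xy.1 - b)} ≃
      Σ x : ZMod p, {y : ZMod p // y ^ 2 = ∏ b ∈ S, (x - b)} :=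
    Equiv.subtypeProdEquivSigmaSubtype (fun x y => y ^ 2 = ∏ b ∈ S, (x - b))
  rw [Nat.card_eq_fintype_card, Fintype.card_congr e, Fintype.card_sigma]
  have hga : ∀ x ∈ A, 1 ≤ Fintype.card {y : ZMod p // y ^ 2 = ∏ b ∈ S, (x - b)} := by
    intro x hx
    refine Fintype.card_pos_iff.mpr ⟨⟨0, ?_⟩⟩
    rw [hA x hx]
    simp
  have hgb : ∀ x ∈ B, 2 ≤ Fintype.card {y : ZMod p // y ^ 2 = ∏ b ∈ S, (x - b)} := by
    intro x hx
    obtain ⟨c, hc0, hc⟩ := hB x hx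
    refine Fintype.one_lt_card_iff.mpr ⟨⟨c, hc⟩, ⟨-c, by rw [neg_pow]; simpa using hc⟩, ?_⟩
    intro h
    have hcc : c = -c := congrArg Subtype.val h
    have h2c : 2 * c = 0 := by linear_combination hcc
    rcases mul_eq_zero.mp h2c with h' | h'
    · exact h2 h'
    · exact hc0 h'
  calc A.card + 2 * B.card
      = ∑ _x ∈ A, 1 + ∑ _x ∈ B, 2 := by simp [mul_comm]
    _ ≤ (∑ x ∈ A, Fintype.card {y : ZMod p // y ^ 2 = ∏ b ∈ S, (x - b)}) +
        ∑ x ∈ B, Fintype.card {y : ZMod p // y ^ 2 = ∏ b ∈ S, (x - b)} :=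
        add_le_add (Finset.sum_le_sum hga) (Finset.sum_le_sum hgb)
    _ = ∑ x ∈ A ∪ B, Fintype.card {y : ZMod p // y ^ 2 = ∏ b ∈ S, (x - b)} :=
        (Finset.sum_union hAB).symm
    _ ≤ ∑ x : ZMod p, Fintype.card {y : ZMod p // y ^ 2 = ∏ b ∈ S, (x - b)} :=
        Finset.sum_le_sum_of_subset (Finset.subset_univ _)

/-- Final arithmetic step. -/
private lemma final_step {S : Finset (ZMod p)} (hgt : p > 100)
    (hX : 3 * (p / 2) + 1 ≤ Xcard p S) : (Xcard p S : ℝ) > 1.39 * p := by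
  have hodd : p % 2 = 1 := aux_odd (by omega)
  have hnat : 3 * p ≤ 2 * Xcard p S + 1 := by omega
  have hcast : (3 : ℝ) * p ≤ 2 * (Xcard p S : ℝ) + 1 := by
    exact_mod_cast hnat
  have hp' : (100 : ℝ) < p := by exact_mod_cast hgt
  nlinarith

end Aux

/-- For all sufficiently large primes `p` there is a subset `S ⊆ GF(p)` with
`|X_S(GF(p))| > 1.39 p`. -/
theorem exists_Xcard_gt_139 :
    ∃ p₀ : ℕ, ∀ p : ℕ, p.Prime → p > p₀ →
      ∃ S : Finset (ZMod p), S.Nonempty ∧ (Xcard p S : ℝ) > 1.39 * p := by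
  classical
  refine ⟨100, fun p hp hgt => ?_⟩
  haveI : Fact p.Prime := ⟨hp⟩
  have hp2 : p ≠ 2 := by omega
  have hodd : p % 2 = 1 := aux_odd hp2
  have hhalf : p / 2 ≠ 0 := aux_half_ne hp2
  obtain ⟨hQc, hNc⟩ := card_QN hp2
  have hQprod : ∀ a : ZMod p, ∏ b ∈ Qset p, (a - b) = a ^ (p / 2) - 1 :=
    prod_formula hp2 1 _ (fun a ha => ((mem_Qset_iff hp2).mp ha).2) hQc
  have hNprod : ∀ a : ZMod p, ∏ b ∈ Nset p, (a - b) = a ^ (p / 2) + 1 := by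
    intro a
    have h := prod_formula hp2 (-1) _ (fun a ha => ((mem_Nset_iff_s18 hp2).mp ha).2) hNc a
    rw [h]; ring
  have hQne : (Qset p).Nonempty := Finset.card_pos.mp (by omega)
  have hNne : (Nset p).Nonempty := Finset.card_pos.mp (by omega)
  have hXlow : ∀ (S A B : Finset (ZMod p)),
      (∀ a ∈ A, ∏ b ∈ S, (a - b) = 0) →
      (∀ a ∈ B, ∃ c : ZMod p, c ≠ 0 ∧ c ^ 2 = ∏ b ∈ S, (a - b)) →
      Disjoint A B → A.card + 2 * B.card + 1 ≤ Xcard p S := by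
    intro S A B hA hB hAB
    have h1 := count_lower hp2 S A B hA hB hAB
    have h2 : 1 ≤ if Even S.card then 2 else 1 := by split <;> omega
    unfold Xcard
    omega
  have h8 : p % 8 = 1 ∨ p % 8 = 3 ∨ p % 8 = 5 ∨ p % 8 = 7 := by omega
  rcases h8 with h8 | h8 | h8 | h8
  · -- p ≡ 1 mod 8 : -2 is a square, S = Q
    refine ⟨Qset p, hQne, ?_⟩
    obtain ⟨r, hr⟩ := (ZMod.exists_sq_eq_neg_two_iff hp2).mpr (Or.inl h8)
    have hr0 : r ≠ 0 := by
      rintro rfl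
      exact aux_two_ne_zero hp2 (by linear_combination -hr)
    refine final_step hgt (le_trans (by rw [hQc, hNc]; omega) (hXlow (Qset p) (Qset p) (Nset p)
      (fun a ha => Finset.prod_eq_zero ha (by simp)) (fun a ha => ⟨r, hr0, ?_⟩) disjoint_QN))
    rw [hQprod a, ((mem_Nset_iff_s18 hp2).mp ha).2, pow_two, ← hr]; ring
  · -- p ≡ 3 mod 8 : -2 is a square, S = Q
    refine ⟨Qset p, hQne, ?_⟩
    obtain ⟨r, hr⟩ := (ZMod.exists_sq_eq_neg_two_iff hp2).mpr (Or.inr h8)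
    have hr0 : r ≠ 0 := by
      rintro rfl
      exact aux_two_ne_zero hp2 (by linear_combination -hr)
    refine final_step hgt (le_trans (by rw [hQc, hNc]; omega) (hXlow (Qset p) (Qset p) (Nset p)
      (fun a ha => Finset.prod_eq_zero ha (by simp)) (fun a ha => ⟨r, hr0, ?_⟩) disjoint_QN))
    rw [hQprod a, ((mem_Nset_iff_s18 hp2).mp ha).2, pow_two, ← hr]; ring
  · -- p ≡ 5 mod 8 : -2 and every nonresidue are nonsquares, S = insert 0 Q
    have h0Q : (0 : ZMod p) ∉ Qset p := by
      intro h; exact ((mem_Qset_iff hp2).mp h).1 rfl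
    refine ⟨insert 0 (Qset p), Finset.insert_nonempty _ _, ?_⟩
    have hns2 : ¬ IsSquare (-2 : ZMod p) := by
      rw [ZMod.exists_sq_eq_neg_two_iff hp2]; omega
    have hchi2 : quadraticChar (ZMod p) (-2) = -1 :=
      quadraticChar_neg_one_iff_not_isSquare.mpr hns2
    have hprodIns : ∀ a : ZMod p,
        ∏ b ∈ insert 0 (Qset p), (a - b) = a * (a ^ (p / 2) - 1) := by
      intro a
      rw [Finset.prod_insert h0Q, hQprod a, sub_zero]
    have hB : ∀ a ∈ Nset p, ∃ c : ZMod p, c ≠ 0 ∧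
        c ^ 2 = ∏ b ∈ insert 0 (Qset p), (a - b) := by
      intro a ha
      obtain ⟨ha0, haN⟩ := (mem_Nset_iff_s18 hp2).mp ha
      have hnsa : ¬ IsSquare a := by
        intro hsa
        simp only [Nset, Finset.mem_filter] at ha
        obtain ⟨r, hr⟩ := hsa
        exact ha.2.2 ⟨r, by rw [pow_two]; exact hr.symm⟩
      have hchia : quadraticChar (ZMod p) a = -1 :=
        quadraticChar_neg_one_iff_not_isSquare.mpr hnsa
      have hne : (-2 : ZMod p) * a ≠ 0 := by
        intro h
        rcases mul_eq_zero.mp h with h' | h'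
        · exact aux_two_ne_zero hp2 (by linear_combination -h')
        · exact ha0 h'
      have hchi : quadraticChar (ZMod p) ((-2) * a) = 1 := by
        rw [map_mul, hchi2, hchia]; ring
      obtain ⟨r, hr⟩ := (quadraticChar_one_iff_isSquare hne).mp hchi
      have hr0 : r ≠ 0 := by
        rintro rfl
        rw [mul_zero] at hr
        exact hne hr
      refine ⟨r, hr0, ?_⟩
      rw [hprodIns a, haN, pow_two, ← hr]; ring
    have hAcard : (insert 0 (Qset p)).card = p / 2 + 1 := by
      rw [Finset.card_insert_of_notMem h0Q, hQc]
    have hdisj : Disjoint (insert 0 (Qset p)) (Nset p) := by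
      rw [Finset.disjoint_left]
      intro a ha hb
      obtain ⟨hb0, _⟩ := (mem_Nset_iff_s18 hp2).mp hb
      rcases Finset.mem_insert.mp ha with rfl | ha'
      · exact hb0 rfl
      · exact Finset.disjoint_left.mp disjoint_QN ha' hb
    refine final_step hgt (le_trans (by rw [hAcard, hNc]; omega)
      (hXlow (insert 0 (Qset p)) (insert 0 (Qset p)) (Nset p)
        (fun a ha => Finset.prod_eq_zero ha (by simp)) hB hdisj))
  · -- p ≡ 7 mod 8 : 2 is a square, S = N
    refine ⟨Nset p, hNne, ?_⟩
    obtain ⟨r, hr⟩ := (ZMod.exists_sq_eq_two_iff hp2).mpr (Or.inr h8)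
    have hr0 : r ≠ 0 := by
      rintro rfl
      exact aux_two_ne_zero hp2 (by linear_combination hr)
    refine final_step hgt (le_trans (by rw [hQc, hNc]; omega) (hXlow (Nset p) (Nset p) (Qset p)
      (fun a ha => Finset.prod_eq_zero ha (by simp)) (fun a ha => ⟨r, hr0, ?_⟩) disjoint_QN.symm))
    rw [hNprod a, ((mem_Qset_iff hp2).mp ha).2, pow_two, ← hr]; ring
end

section
/- Let p be a prime with p ≡ 1 (mod 8) or p ≡ 3 (mod 8), and let Q ⊂ GF(p)^× be the set of quadratic residues. Then |X_Q(GF(p))| = 1.5·p + a for some constant a with −1/2 ≤ a ≤ 5/2; more precisely, |X_Q(GF(p))| = (3/2)p + χ(f_Q(0)) + 1/2 if p ≡ 3 (mod 8), and |X_Q(GF(p))| = (3/2)p + χ(f_Q(0)) + 3/2 if p ≡ 1 (mod 8). -/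
open Finset

open Polynomial


lemma vkey (p : ℕ) [Fact p.Prime] (hp2 : p ≠ 2) :
    (Qset p).card = p / 2 ∧ (Nset p).card = p / 2 ∧
      ∀ x : ZMod p, ∏ b ∈ Qset p, (x - b) = x ^ (p / 2) - 1 := by
  have hp : p.Prime := Fact.out
  have hodd : p % 2 = 1 := Nat.odd_iff.mp (hp.odd_of_ne_two hp2)
  have hple : 2 ≤ p := hp.two_le
  have hk0 : p / 2 ≠ 0 := by omega
  set k := p / 2 with hk
  -- membership characterizations
  have hQ : ∀ a : ZMod p, a ∈ Qset p ↔ a ≠ 0 ∧ a ^ k = 1 := by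
    intro a
    simp only [Qset, mem_filter, mem_univ, true_and]
    constructor
    · rintro ⟨h0, b, hb⟩
      exact ⟨h0, (ZMod.euler_criterion p h0).mp ⟨b, by rw [← hb]; ring⟩⟩
    · rintro ⟨h0, h1⟩
      obtain ⟨b, hb⟩ := (ZMod.euler_criterion p h0).mpr h1
      exact ⟨h0, b, by rw [hb]; ring⟩
  have hNmem : ∀ a : ZMod p, a ∈ Nset p ↔ a ≠ 0 ∧ a ^ k = -1 := by
    intro a
    simp only [Nset, mem_filter, mem_univ, true_and]
    constructor
    · rintro ⟨h0, hns⟩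
      refine ⟨h0, ?_⟩
      rcases ZMod.pow_div_two_eq_neg_one_or_one p h0 with h | h
      · exact absurd ((ZMod.euler_criterion p h0).mpr h) (fun ⟨b, hb⟩ => hns ⟨b, by rw [hb]; ring⟩)
      · exact h
    · rintro ⟨h0, h1⟩
      refine ⟨h0, fun ⟨b, hb⟩ => ?_⟩
      have : a ^ k = 1 := (ZMod.euler_criterion p h0).mp ⟨b, by rw [← hb]; ring⟩
      rw [this] at h1
      haveI : Fact (2 < p) := ⟨by omega⟩
      exact ZMod.neg_one_ne_one h1.symm
  -- the polynomials
  set g : (ZMod p)[X] := X ^ k - C 1 with hg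
  set g' : (ZMod p)[X] := X ^ k - C (-1) with hg'
  have hmg : g.Monic := monic_X_pow_sub_C _ hk0
  have hmg' : g'.Monic := monic_X_pow_sub_C _ hk0
  have hdg : g.natDegree = k := by rw [hg, natDegree_X_pow_sub_C]
  have hdg' : g'.natDegree = k := by rw [hg', natDegree_X_pow_sub_C]
  have hleQ : (Qset p).val ≤ g.roots := by
    refine Multiset.le_iff_count.mpr fun a => ?_
    by_cases ha : a ∈ Qset p
    · have h1 : Multiset.count a (Qset p).val = 1 :=
        Multiset.count_eq_one_of_mem (Qset p).nodup ha
      have hmem : a ∈ g.roots := by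
        rw [mem_roots hmg.ne_zero]
        simp only [IsRoot, hg, eval_sub, eval_pow, eval_X, eval_C]
        rw [(hQ a).mp ha |>.2, sub_self]
      rw [h1]
      exact Multiset.one_le_count_iff_mem.mpr hmem
    · rw [Multiset.count_eq_zero_of_notMem (by simpa using ha)]
      exact Nat.zero_le _
  have hleN : (Nset p).val ≤ g'.roots := by
    refine Multiset.le_iff_count.mpr fun a => ?_
    by_cases ha : a ∈ Nset p
    · have h1 : Multiset.count a (Nset p).val = 1 :=
        Multiset.count_eq_one_of_mem (Nset p).nodup ha
      have hmem : a ∈ g'.roots := by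
        rw [mem_roots hmg'.ne_zero]
        simp only [IsRoot, hg', eval_sub, eval_pow, eval_X, eval_C]
        rw [(hNmem a).mp ha |>.2, sub_self]
      rw [h1]
      exact Multiset.one_le_count_iff_mem.mpr hmem
    · rw [Multiset.count_eq_zero_of_notMem (by simpa using ha)]
      exact Nat.zero_le _
  have hcQ : (Qset p).card ≤ k := by
    calc (Qset p).card = Multiset.card (Qset p).val := rfl
    _ ≤ Multiset.card g.roots := Multiset.card_le_card hleQ
    _ ≤ g.natDegree := g.card_roots'
    _ = k := hdg
  have hcN : (Nset p).card ≤ k := by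
    calc (Nset p).card = Multiset.card (Nset p).val := rfl
    _ ≤ Multiset.card g'.roots := Multiset.card_le_card hleN
    _ ≤ g'.natDegree := g'.card_roots'
    _ = k := hdg'
  have hdis : Disjoint (Qset p) (Nset p) := by
    simp only [Finset.disjoint_left, Qset, Nset, mem_filter, mem_univ, true_and]
    rintro a ⟨h0, h⟩ ⟨h0', h'⟩
    exact h' h
  have hunion : Qset p ∪ Nset p = Finset.univ.erase 0 := by
    ext a
    simp only [Finset.mem_union, Qset, Nset, mem_filter, mem_univ, true_and,
      Finset.mem_erase, and_true]
    tauto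
  have hsum : (Qset p).card + (Nset p).card = p - 1 := by
    rw [← Finset.card_union_of_disjoint hdis, hunion,
      Finset.card_erase_of_mem (mem_univ 0), Finset.card_univ, ZMod.card]
  have hcardQ : (Qset p).card = k := by omega
  refine ⟨hcardQ, by omega, fun x => ?_⟩
  have hroots : g.roots = (Qset p).val := by
    refine (Multiset.eq_of_le_of_card_le hleQ ?_).symm
    calc Multiset.card g.roots ≤ g.natDegree := g.card_roots'
    _ = k := hdg
    _ = Multiset.card (Qset p).val := hcardQ.symm
  have hfact := prod_multiset_X_sub_C_of_monic_of_roots_card_eq hmg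
    (by rw [hroots, hdg]; exact hcardQ)
  have := congrArg (eval x) hfact
  rw [hroots] at this
  rw [eval_multiset_prod, Multiset.map_map] at this
  simp only [Function.comp, eval_sub, eval_X, eval_C, hg, eval_pow, eval_one] at this
  rw [Finset.prod_eq_multiset_prod]
  exact this


lemma vcount (p : ℕ) [Fact p.Prime] (hp2 : p ≠ 2) (S : Finset (ZMod p)) :
    (Nat.card {xy : ZMod p × ZMod p // xy.2 ^ 2 = ∏ b ∈ S, (xy.1 - b)} : ℤ) =
      p + charSum p S := by
  have hchar : ringChar (ZMod p) ≠ 2 := by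
    rw [ZMod.ringChar_zmod_n]; exact hp2
  rw [Nat.card_eq_fintype_card,
    Fintype.card_congr
      (Equiv.subtypeProdEquivSigmaSubtype fun a b : ZMod p => b ^ 2 = ∏ c ∈ S, (a - c)),
    Fintype.card_sigma]
  have key : ∀ a : ZMod p, (Fintype.card {b : ZMod p // b ^ 2 = ∏ c ∈ S, (a - c)} : ℤ)
      = quadraticChar (ZMod p) (∏ c ∈ S, (a - c)) + 1 := by
    intro a
    rw [← quadraticChar_card_sqrts hchar]
    rw [Set.toFinset_card]
    rfl
  push_cast
  rw [Finset.sum_congr rfl fun a _ => key a, Finset.sum_add_distrib, charSum]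
  simp [ZMod.card, add_comm]

lemma vcharSum (p : ℕ) [Fact p.Prime] (hp2 : p ≠ 2) :
    charSum p (Qset p) = quadraticChar (ZMod p) (-1) + ((p / 2 : ℕ) : ℤ) * quadraticChar (ZMod p) (-2) := by
  obtain ⟨hcardQ, hcardN, hprod⟩ := vkey p hp2
  have hodd : p % 2 = 1 := Nat.odd_iff.mp ((Fact.out : p.Prime).odd_of_ne_two hp2)
  have hple : 2 ≤ p := (Fact.out : p.Prime).two_le
  have hk0 : p / 2 ≠ 0 := by omega
  have hdis : Disjoint (Qset p) (Nset p) := by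
    simp only [Finset.disjoint_left, Qset, Nset, mem_filter, mem_univ, true_and]
    rintro a ⟨h0, h⟩ ⟨h0', h'⟩
    exact h' h
  have hunion : Qset p ∪ Nset p = Finset.univ.erase 0 := by
    ext a
    simp only [Finset.mem_union, Qset, Nset, mem_filter, mem_univ, true_and,
      Finset.mem_erase, and_true]
    tauto
  have h0univ : (Finset.univ : Finset (ZMod p)) = insert 0 (Qset p ∪ Nset p) := by
    rw [hunion, Finset.insert_erase (mem_univ 0)]
  rw [charSum, h0univ, Finset.sum_insert (by rw [hunion]; simp), Finset.sum_union hdis]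
  have hQ0 : ∑ a ∈ Qset p, quadraticChar (ZMod p) (∏ b ∈ Qset p, (a - b)) = 0 := by
    refine Finset.sum_eq_zero fun a ha => ?_
    have : ∏ b ∈ Qset p, (a - b) = 0 := Finset.prod_eq_zero ha (by rw [sub_self])
    rw [this, MulChar.map_zero]
  have hN2 : ∑ a ∈ Nset p, quadraticChar (ZMod p) (∏ b ∈ Qset p, (a - b))
      = ((p / 2 : ℕ) : ℤ) * quadraticChar (ZMod p) (-2) := by
    have step : ∀ a ∈ Nset p,
        quadraticChar (ZMod p) (∏ b ∈ Qset p, (a - b)) = quadraticChar (ZMod p) (-2) := by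
      intro a ha
      have h0 : a ≠ 0 := ((Finset.mem_filter.mp ha).2).1
      have hak : a ^ (p / 2) = -1 := by
        rcases ZMod.pow_div_two_eq_neg_one_or_one p h0 with h | h
        · exfalso
          obtain ⟨b, hb⟩ := (ZMod.euler_criterion p h0).mpr h
          exact ((Finset.mem_filter.mp ha).2).2 ⟨b, by rw [hb]; ring⟩
        · exact h
      have : ∏ b ∈ Qset p, (a - b) = -2 := by rw [hprod a, hak]; ring
      rw [this]
    rw [Finset.sum_congr rfl step, Finset.sum_const, hcardN, nsmul_eq_mul]
  rw [hQ0, hN2, hprod 0, zero_pow hk0, zero_sub]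
  ring


/-- Voloch's lemma: for `p ≡ 1, 3 (mod 8)`, `|X_Q(GF(p))| = 1.5p + a` with
`-1/2 ≤ a ≤ 5/2`; more precisely `|X_Q(GF(p))| = (3/2)p + χ(f_Q(0)) + 1/2` if
`p ≡ 3 (mod 8)` and `= (3/2)p + χ(f_Q(0)) + 3/2` if `p ≡ 1 (mod 8)`. -/
theorem voloch_XQ (p : ℕ) [Fact p.Prime] (hp : p % 8 = 1 ∨ p % 8 = 3) :
    (∃ a : ℝ, -(1 / 2) ≤ a ∧ a ≤ 5 / 2 ∧ (Xcard p (Qset p) : ℝ) = 1.5 * p + a) ∧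
    (p % 8 = 3 → (Xcard p (Qset p) : ℝ) =
      3 / 2 * p + ((quadraticChar (ZMod p) (∏ b ∈ Qset p, (0 - b)) : ℤ) : ℝ) + 1 / 2) ∧
    (p % 8 = 1 → (Xcard p (Qset p) : ℝ) =
      3 / 2 * p + ((quadraticChar (ZMod p) (∏ b ∈ Qset p, (0 - b)) : ℤ) : ℝ) + 3 / 2) := by
  have hp2 : p ≠ 2 := by rcases hp with h | h <;> omega
  have hprime : p.Prime := Fact.out
  have hodd : p % 2 = 1 := Nat.odd_iff.mp (hprime.odd_of_ne_two hp2)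
  have hple : 2 ≤ p := hprime.two_le
  have hchar : ringChar (ZMod p) ≠ 2 := by rw [ZMod.ringChar_zmod_n]; exact hp2
  obtain ⟨hcardQ, hcardN, hprod⟩ := vkey p hp2
  have hcs := vcharSum p hp2
  have hN := vcount p hp2 (Qset p)
  have hχ2 : quadraticChar (ZMod p) (-2) = 1 := by
    rw [quadraticChar_neg_two hchar, ZMod.card, ZMod.χ₈'_nat_eq_if_mod_eight]
    rcases hp with h | h <;> simp [h, hodd]
  have hprod0 : ∏ b ∈ Qset p, ((0 : ZMod p) - b) = -1 := by
    rw [hprod 0, zero_pow (by omega : p / 2 ≠ 0), zero_sub]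
  have hEvenIff : Even ((Qset p).card) ↔ p % 8 = 1 := by
    rw [hcardQ, Nat.even_iff]
    rcases hp with h | h <;> omega
  have hpreal : (p : ℝ) = 2 * ((p / 2 : ℕ) : ℝ) + 1 := by
    have h : p = 2 * (p / 2) + 1 := by omega
    exact_mod_cast congrArg (Nat.cast (R := ℝ)) h
  rcases hp with h1 | h3
  · -- p % 8 = 1
    have hχ1 : quadraticChar (ZMod p) (-1) = 1 := by
      rw [quadraticChar_neg_one hchar, ZMod.card, ZMod.χ₄_nat_eq_if_mod_four]
      have h4 : p % 4 = 1 := by omega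
      simp [h4, hodd]
    have hXn : Xcard p (Qset p) =
        Nat.card {xy : ZMod p × ZMod p // xy.2 ^ 2 = ∏ b ∈ Qset p, (xy.1 - b)} + 2 := by
      rw [Xcard, if_pos (hEvenIff.mpr h1)]
    have hXZ : (Xcard p (Qset p) : ℤ) = p + (1 + ((p / 2 : ℕ) : ℤ)) + 2 := by
      rw [hXn]
      push_cast
      rw [hN, hcs, hχ1, hχ2, mul_one]
      push_cast
      ring
    have hXr : (Xcard p (Qset p) : ℝ) = (p : ℝ) + (1 + ((p / 2 : ℕ) : ℝ)) + 2 := by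
      have h := congrArg (fun z : ℤ => (z : ℝ)) hXZ
      push_cast at h
      exact h
    refine ⟨⟨5 / 2, by norm_num, le_refl _, ?_⟩, fun h => by omega, fun _ => ?_⟩
    · rw [hXr, hpreal]; norm_num; ring
    · rw [hXr, hprod0, hχ1, hpreal]; push_cast; ring
  · -- p % 8 = 3
    have hχ1 : quadraticChar (ZMod p) (-1) = -1 := by
      rw [quadraticChar_neg_one hchar, ZMod.card, ZMod.χ₄_nat_eq_if_mod_four]
      have h4 : p % 4 = 3 := by omega
      simp [h4, hodd]
    have hXn : Xcard p (Qset p) =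
        Nat.card {xy : ZMod p × ZMod p // xy.2 ^ 2 = ∏ b ∈ Qset p, (xy.1 - b)} + 1 := by
      rw [Xcard, if_neg (fun h => by have := hEvenIff.mp h; omega)]
    have hXZ : (Xcard p (Qset p) : ℤ) = p + (-1 + ((p / 2 : ℕ) : ℤ)) + 1 := by
      rw [hXn]
      push_cast
      rw [hN, hcs, hχ1, hχ2, mul_one]
      push_cast
      ring
    have hXr : (Xcard p (Qset p) : ℝ) = (p : ℝ) + (-1 + ((p / 2 : ℕ) : ℝ)) + 1 := by
      have h := congrArg (fun z : ℤ => (z : ℝ)) hXZ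
      push_cast at h
      exact h
    refine ⟨⟨-(1 / 2), le_refl _, by norm_num, ?_⟩, fun _ => ?_, fun h => by omega⟩
    · rw [hXr, hpreal]; norm_num; ring
    · rw [hXr, hprod0, hχ1, hpreal]; push_cast; ring
end
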